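/- For arbitrary integers m ≥ 2, n ≥ m+1, and d ≥ 1, there exists an integral point set M of n points in m-dimensional Euclidean space (that is, M spans ℝ^m and all pairwise distances are integers) containing two points M₁, M₂ with |M₁M₂| = d. -/

import Mathlib

/-!
Put the points `(d x) • u` on a line, for the integers `x` of a finite set `T`, and place a
regular simplex with `m - 1` vertices and edge `d` in the hyperplane through `(d / 2) • u`
orthogonal to `u`, with all vertices at distance `d √C / 2` from `(d / 2) • u`. A line point is
then at distance `(d / 2) √((2x - 1)² + C)` from every vertex, an integer when
`(2x - 1)² + C = (2s)²`. For `C = 3ᵏ (3ᵏ + 2) ≡ 3 (mod 4)` every factorization `C = a b` gives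
such an `x = (b - a + 2) / 4`: the factorizations `3ᵗ · 3ᵏ⁻ᵗ (3ᵏ + 2)` give `k + 1` distinct
values, among them `1`, and `(3ᵏ + 2) · 3ᵏ` gives `0`, so two of the points are at distance `d`.
The simplex is `α • f j + β • ∑ i, f i` for an orthonormal family `f`, with `α = d / √2`.
-/

open Finset

theorem four_dvd_of_mul_emod_four_eq_three {a b : ℤ} (h : a * b % 4 = 3) :
    4 ∣ b - a + 2 ∧ 4 ∣ a + b := by
  have key : ∀ x y : ZMod 4, x * y = 3 → y - x + 2 = 0 ∧ x + y = 0 := by decide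
  have hab := ZMod.intCast_mod (a * b) 4
  rw [Nat.cast_ofNat, h] at hab
  push_cast at hab
  obtain ⟨h₁, h₂⟩ := key _ _ hab.symm
  exact ⟨(ZMod.intCast_zmod_eq_zero_iff_dvd _ 4).1 (by push_cast; exact h₁),
    (ZMod.intCast_zmod_eq_zero_iff_dvd _ 4).1 (by push_cast; exact h₂)⟩

/-- The point `x • u` of a line (`‖u‖ = 1`) is at distance `|s|` from every point at distance
`√C / 2` from `(1 / 2) • u` in the hyperplane orthogonal to `u`. -/
def IsGoodAbscissa (C x : ℤ) : Prop :=
  ∃ s : ℤ, (2 * x - 1) ^ 2 + C = (2 * s) ^ 2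

theorem isGoodAbscissa_of_mul_eq {a b C : ℤ} (hab : a * b = C) (hC : C % 4 = 3) :
    IsGoodAbscissa C ((b - a + 2) / 4) := by
  obtain ⟨⟨x, hx⟩, ⟨s, hs⟩⟩ := four_dvd_of_mul_emod_four_eq_three (hab ▸ hC)
  refine ⟨s, ?_⟩
  rw [hx, Int.mul_ediv_cancel_left x four_ne_zero]
  have h : 4 * ((2 * x - 1) ^ 2 + C) = 4 * (2 * s) ^ 2 := by
    linear_combination (-(4 * x - 2 + b - a)) * hx + (4 * s + a + b) * hs - 4 * hab
  exact mul_left_cancel₀ four_ne_zero h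

theorem three_pow_mul_three_pow_add_two_emod_four (k : ℕ) :
    3 ^ k * (3 ^ k + 2) % 4 = (3 : ℤ) := by
  obtain ⟨c, hc⟩ : Odd ((3 : ℤ) ^ k) := Odd.pow (by decide)
  rw [hc, show (2 * c + 1) * (2 * c + 1 + 2) = 4 * (c ^ 2 + 2 * c) + 3 by ring]
  omega

theorem isGoodAbscissa_zero (k : ℕ) : IsGoodAbscissa (3 ^ k * (3 ^ k + 2)) 0 := by
  simpa using isGoodAbscissa_of_mul_eq (a := 3 ^ k + 2) (b := 3 ^ k) (by ring)
    (three_pow_mul_three_pow_add_two_emod_four k)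

/-- The abscissa coming from the factorization `3 ^ t * (3 ^ (k - t) * (3 ^ k + 2))`
of `3 ^ k * (3 ^ k + 2)`. -/
def powAbscissa (k t : ℕ) : ℤ := (3 ^ (k - t) * (3 ^ k + 2) - 3 ^ t + 2) / 4

section powAbscissa
variable {k t : ℕ}

theorem three_pow_mul_three_pow_sub_mul (ht : t ≤ k) :
    (3 : ℤ) ^ t * (3 ^ (k - t) * (3 ^ k + 2)) = 3 ^ k * (3 ^ k + 2) := by
  rw [← mul_assoc, ← pow_add, Nat.add_sub_cancel' ht]

theorem isGoodAbscissa_powAbscissa (ht : t ≤ k) :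
    IsGoodAbscissa (3 ^ k * (3 ^ k + 2)) (powAbscissa k t) :=
  isGoodAbscissa_of_mul_eq (three_pow_mul_three_pow_sub_mul ht)
    (three_pow_mul_three_pow_add_two_emod_four k)

theorem powAbscissa_self : powAbscissa k k = 1 := by simp [powAbscissa]

theorem strictAntiOn_powAbscissa : StrictAntiOn (powAbscissa k) (Set.Iic k) := by
  have hdvd : ∀ t ≤ k, (4 : ℤ) ∣ 3 ^ (k - t) * (3 ^ k + 2) - 3 ^ t + 2 := fun t ht =>
    (four_dvd_of_mul_emod_four_eq_three ((three_pow_mul_three_pow_sub_mul ht).symm ▸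
      three_pow_mul_three_pow_add_two_emod_four k)).1
  intro s hs t ht hst
  have h₁ : (3 : ℤ) ^ (k - t) ≤ 3 ^ (k - s) := pow_le_pow_right₀ (by norm_num) (by omega)
  have h₂ : (3 : ℤ) ^ s < 3 ^ t := pow_lt_pow_right₀ (by norm_num) hst
  have h₃ := mul_le_mul_of_nonneg_right h₁ (by positivity : (0 : ℤ) ≤ 3 ^ k + 2)
  have := hdvd s hs
  have := hdvd t ht
  unfold powAbscissa
  omega

end powAbscissa

theorem exists_finset_isGoodAbscissa {N : ℕ} (hN : 2 ≤ N) :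
    ∃ C : ℤ, 2 ≤ C ∧ ∃ T : Finset ℤ, T.card = N ∧ 0 ∈ T ∧ 1 ∈ T ∧
      ∀ x ∈ T, IsGoodAbscissa C x := by
  set T' := insert 0 ((Iic N).image (powAbscissa N))
  have h1 : (1 : ℤ) ∈ T' :=
    mem_insert_of_mem (mem_image.2 ⟨N, mem_Iic.2 le_rfl, powAbscissa_self⟩)
  have hcard : N ≤ T'.card :=
    calc N ≤ ((Iic N).image (powAbscissa N)).card := by
          rw [card_image_of_injOn (by simpa using strictAntiOn_powAbscissa.injOn), Nat.card_Iic]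
          omega
      _ ≤ T'.card := card_le_card (subset_insert _ _)
  obtain ⟨T, h01, hT, hTcard⟩ := exists_subsuperset_card_eq (s := {0, 1})
    (insert_subset (mem_insert_self _ _) (singleton_subset_iff.2 h1)) (card_le_two.trans hN) hcard
  have hC : (2 : ℤ) ≤ 3 ^ N * (3 ^ N + 2) := by
    have : (1 : ℤ) ≤ 3 ^ N := one_le_pow₀ (by norm_num)
    nlinarith
  refine ⟨_, hC, T, hTcard, h01 (by simp), h01 (by simp), fun x hx => ?_⟩
  rcases mem_insert.1 (hT hx) with rfl | hx
  · exact isGoodAbscissa_zero N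
  obtain ⟨t, ht, rfl⟩ := mem_image.1 hx
  exact isGoodAbscissa_powAbscissa (mem_Iic.1 ht)

theorem Submodule.span_range_smul_add_smul_sum {K V ι : Type*} [Field K] [AddCommGroup V]
    [Module K V] [Fintype ι] (f : ι → V) {α β : K} (hα : α ≠ 0) (hαβ : α + Fintype.card ι * β ≠ 0) :
    span K (Set.range fun j => α • f j + β • ∑ i, f i) = span K (Set.range f) := by
  set W := span K (Set.range fun j => α • f j + β • ∑ i, f i)
  have hmem : ∀ j, α • f j + β • ∑ i, f i ∈ W := fun j => subset_span ⟨j, rfl⟩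
  have hsum : ∑ i, f i ∈ W := by
    have h : ∑ j, (α • f j + β • ∑ i, f i) ∈ W := W.sum_mem fun j _ => hmem j
    rw [sum_add_distrib, ← smul_sum, sum_const, card_univ, ← Nat.cast_smul_eq_nsmul K, smul_smul,
      ← add_smul] at h
    simpa [hαβ] using W.smul_mem (α + Fintype.card ι * β)⁻¹ h
  refine le_antisymm (span_le.2 ?_) (span_le.2 ?_)
  · rintro _ ⟨j, rfl⟩
    exact add_mem (smul_mem _ _ (subset_span ⟨j, rfl⟩))
      (smul_mem _ _ (sum_mem fun i _ => subset_span ⟨i, rfl⟩))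
  · rintro _ ⟨j, rfl⟩
    have h := W.smul_mem α⁻¹ (sub_mem (hmem j) (W.smul_mem β hsum))
    simpa [hα] using h

theorem exists_nonneg_sq_add_two_mul_add_mul_sq_eq {c α r : ℝ} (hc : 0 ≤ c) (hα : 0 < α)
    (hr : α ^ 2 ≤ r) : ∃ β, 0 ≤ β ∧ α ^ 2 + 2 * α * β + c * β ^ 2 = r := by
  set s := √(α ^ 2 + c * (r - α ^ 2))
  have hs : s ^ 2 = α ^ 2 + c * (r - α ^ 2) := Real.sq_sqrt (by positivity)
  have hs0 : 0 ≤ s := Real.sqrt_nonneg _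
  -- the nonnegative root of `c β² + 2αβ + α² - r`, written without dividing by `c`
  refine ⟨(r - α ^ 2) / (α + s), div_nonneg (by linarith) (by positivity), ?_⟩
  field_simp
  linear_combination (-(r - α ^ 2)) * hs

section RegularSimplex
variable {E ι : Type*} [NormedAddCommGroup E] [InnerProductSpace ℝ E] [Fintype ι]
  {f : ι → E}

theorem Orthonormal.norm_smul_add_smul_sum_sq (hf : Orthonormal ℝ f) (α β : ℝ) (j : ι) :
    ‖α • f j + β • ∑ i, f i‖ ^ 2 = α ^ 2 + 2 * α * β + Fintype.card ι * β ^ 2 := by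
  have hj : inner ℝ (f j) (∑ i, f i) = 1 := by
    simpa using hf.inner_right_sum (fun _ => (1 : ℝ)) (mem_univ j)
  have hs : ‖∑ i, f i‖ ^ 2 = Fintype.card ι := by
    rw [← real_inner_self_eq_norm_sq]
    simpa using hf.inner_sum (fun _ => (1 : ℝ)) (fun _ => 1) univ
  rw [norm_add_sq_real, norm_smul, norm_smul, real_inner_smul_left, real_inner_smul_right, hj,
    mul_pow, mul_pow, hs, hf.1 j, Real.norm_eq_abs, Real.norm_eq_abs, sq_abs, sq_abs]
  ring

theorem Orthonormal.dist_smul_add_smul_sum (hf : Orthonormal ℝ f) (α β : ℝ) {j k : ι}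
    (hjk : j ≠ k) :
    dist (α • f j + β • ∑ i, f i) (α • f k + β • ∑ i, f i) = |α| * √2 := by
  have h : ‖f j - f k‖ ^ 2 = 2 := by
    rw [@norm_sub_sq_real, hf.1 j, hf.1 k, hf.inner_eq_zero hjk]; norm_num
  rw [dist_eq_norm, add_sub_add_right_eq_sub, ← smul_sub, norm_smul, Real.norm_eq_abs,
    ← Real.sqrt_sq (norm_nonneg _), h]

theorem Orthonormal.exists_regular_simplex (hf : Orthonormal ℝ f) {e R : ℝ} (he : 0 < e)
    (hR : e ^ 2 ≤ 2 * R ^ 2) :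
    ∃ v : ι → E, (∀ j, ‖v j‖ ^ 2 = R ^ 2) ∧ (∀ j k, j ≠ k → dist (v j) (v k) = e) ∧
      Submodule.span ℝ (Set.range v) = Submodule.span ℝ (Set.range f) := by
  set α := e / √2
  have hα : 0 < α := by positivity
  have hα2 : α ^ 2 = e ^ 2 / 2 := by rw [div_pow, Real.sq_sqrt zero_le_two]
  obtain ⟨β, hβ, hβR⟩ := exists_nonneg_sq_add_two_mul_add_mul_sq_eq
    (Nat.cast_nonneg (Fintype.card ι)) hα (r := R ^ 2) (by linarith)
  refine ⟨fun j => α • f j + β • ∑ i, f i, fun j => ?_, fun j k hjk => ?_, ?_⟩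
  · rw [hf.norm_smul_add_smul_sum_sq, ← hβR]
  · rw [hf.dist_smul_add_smul_sum α β hjk, abs_of_pos hα, div_mul_cancel₀ _ (by positivity)]
  · exact Submodule.span_range_smul_add_smul_sum f hα.ne' (by positivity)

end RegularSimplex

section LineAndSimplex
variable {E ι : Type*} [NormedAddCommGroup E] [InnerProductSpace ℝ E] [Fintype ι]

theorem dist_smul_smul_of_norm_eq_one {u : E} (hu : ‖u‖ = 1) (x y : ℝ) :
    dist (x • u) (y • u) = |x - y| := by
  rw [dist_eq_norm, ← sub_smul, norm_smul, hu, mul_one, Real.norm_eq_abs]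

theorem dist_smul_smul_add_sq {u w : E} (hu : ‖u‖ = 1) (huw : inner ℝ u w = 0) (x y : ℝ) :
    dist (x • u) (y • u + w) ^ 2 = (x - y) ^ 2 + ‖w‖ ^ 2 := by
  rw [dist_eq_norm, sub_add_eq_sub_sub, ← sub_smul, @norm_sub_sq_real, real_inner_smul_left, huw,
    norm_smul, hu, Real.norm_eq_abs, mul_one, sq_abs]
  ring

open Classical in
noncomputable def lineSimplexConfig (u : E) (v : ι → E) (d : ℝ) (T : Finset ℤ) : Finset E :=
  T.image (fun x : ℤ => (d * x) • u) ∪ univ.image fun j => (d / 2) • u + v j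

variable {u : E} {v : ι → E} {T : Finset ℤ}

theorem card_lineSimplexConfig (hu : ‖u‖ = 1) (huv : ∀ j, inner ℝ u (v j) = 0)
    (hv : Function.Injective v) {d : ℝ} (hd : d ≠ 0) :
    (lineSimplexConfig u v d T).card = T.card + Fintype.card ι := by
  classical
  have hline : Function.Injective fun x : ℤ => (d * x) • u := by
    intro x y hxy
    have := congrArg (inner ℝ u) hxy
    simpa [real_inner_smul_right, real_inner_self_eq_norm_sq, hu, hd] using this
  have hdisj :
      Disjoint (T.image fun x : ℤ => (d * x) • u) (univ.image fun j => (d / 2) • u + v j) := by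
    rw [disjoint_left]
    intro p hx hj
    obtain ⟨x, -, rfl⟩ := mem_image.1 hx
    obtain ⟨j, -, hj⟩ := mem_image.1 hj
    have := congrArg (inner ℝ u) hj
    simp only [inner_add_right, real_inner_smul_right, real_inner_self_eq_norm_sq, hu, huv] at this
    have h2 : (2 * x : ℤ) = 1 := by
      exact_mod_cast mul_left_cancel₀ hd (by linarith : d * (2 * x) = d * 1)
    omega
  rw [lineSimplexConfig, card_union_of_disjoint hdisj, card_image_of_injective _ hline,
    card_image_of_injective _ fun j k h => hv (add_left_cancel h), card_univ]

theorem mem_lineSimplexConfig_line {d : ℝ} {x : ℤ} (hx : x ∈ T) :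
    (d * x) • u ∈ lineSimplexConfig u v d T := by
  classical
  exact mem_union_left _ (mem_image_of_mem _ hx)

theorem mem_lineSimplexConfig_simplex (d : ℝ) (j : ι) :
    (d / 2) • u + v j ∈ lineSimplexConfig u v d T := by
  classical
  exact mem_union_right _ (mem_image_of_mem _ (mem_univ j))

theorem affineSpan_lineSimplexConfig (h0 : 0 ∈ T) (h1 : 1 ∈ T) {d : ℝ} (hd : d ≠ 0)
    (hspan : Submodule.span ℝ (insert u (Set.range v)) = ⊤) :
    affineSpan ℝ (lineSimplexConfig u v d T : Set E) = ⊤ := by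
  set M := (lineSimplexConfig u v d T : Set E)
  have hM0 : (0 : E) ∈ M :=
    mem_coe.2 (by simpa using mem_lineSimplexConfig_line (u := u) (v := v) (d := d) h0)
  have hV : ∀ p ∈ M, p ∈ vectorSpan ℝ M := fun p hp => by
    simpa using vsub_mem_vectorSpan ℝ hp hM0
  have hu : u ∈ vectorSpan ℝ M := by
    simpa [smul_smul, hd] using (vectorSpan ℝ M).smul_mem d⁻¹
      (hV _ (mem_lineSimplexConfig_line (v := v) (d := d) h1))
  rw [AffineSubspace.affineSpan_eq_top_iff_vectorSpan_eq_top_of_nonempty ℝ E E ⟨0, hM0⟩,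
    eq_top_iff, ← hspan, Submodule.span_le]
  rintro _ (rfl | ⟨j, rfl⟩)
  · exact hu
  · simpa using sub_mem (hV _ (mem_lineSimplexConfig_simplex d j))
      ((vectorSpan ℝ M).smul_mem (d / 2) hu)

theorem exists_int_dist_eq_of_mem_lineSimplexConfig {C : ℤ} (hT : ∀ x ∈ T, IsGoodAbscissa C x)
    {d : ℕ} (hu : ‖u‖ = 1) (huv : ∀ j, inner ℝ u (v j) = 0)
    (hv : ∀ j, ‖v j‖ ^ 2 = d ^ 2 * C / 4) (hvv : ∀ j k, j ≠ k → dist (v j) (v k) = d) :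
    ∀ p ∈ lineSimplexConfig u v d T, ∀ q ∈ lineSimplexConfig u v d T, ∃ z : ℤ, dist p q = z := by
  classical
  have hline : ∀ x y : ℤ, dist ((d * x : ℝ) • u) ((d * y : ℝ) • u) = (d * |x - y| : ℤ) := by
    intro x y
    rw [dist_smul_smul_of_norm_eq_one hu, ← mul_sub, abs_mul, Nat.abs_cast]
    push_cast; rfl
  have hmixed : ∀ x ∈ T, ∀ j, ∃ z : ℤ, dist ((d * x : ℝ) • u) ((d / 2 : ℝ) • u + v j) = z := by
    intro x hx j
    obtain ⟨s, hs⟩ := hT x hx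
    refine ⟨d * |s|, ?_⟩
    have hs' : ((2 * x - 1) ^ 2 + C : ℝ) = (2 * s) ^ 2 := by exact_mod_cast hs
    refine (pow_left_inj₀ dist_nonneg (by positivity) two_ne_zero).1 ?_
    rw [dist_smul_smul_add_sq hu (huv j), hv j]
    push_cast
    rw [mul_pow, sq_abs]
    linear_combination (d ^ 2 / 4 : ℝ) * hs'
  have hsimplex : ∀ j k, ∃ z : ℤ, dist ((d / 2 : ℝ) • u + v j) ((d / 2 : ℝ) • u + v k) = z := by
    intro j k
    rw [dist_add_left]
    rcases eq_or_ne j k with rfl | hjk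
    · exact ⟨0, by simp⟩
    · exact ⟨d, by simp [hvv j k hjk]⟩
  intro p hp q hq
  simp only [lineSimplexConfig, mem_union, mem_image, mem_univ, true_and] at hp hq
  rcases hp with ⟨x, hx, rfl⟩ | ⟨j, rfl⟩ <;> rcases hq with ⟨y, hy, rfl⟩ | ⟨k, rfl⟩
  · exact ⟨_, hline x y⟩
  · exact hmixed x hx k
  · obtain ⟨z, hz⟩ := hmixed y hy j
    exact ⟨z, by rw [dist_comm, hz]⟩
  · exact hsimplex j k

theorem OrthonormalBasis.exists_integral_point_set (b : OrthonormalBasis (Option ι) ℝ E) {C : ℤ}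
    (hC : 2 ≤ C) {T : Finset ℤ} (h0 : 0 ∈ T) (h1 : 1 ∈ T) (hT : ∀ x ∈ T, IsGoodAbscissa C x)
    {d : ℕ} (hd : 0 < d) :
    ∃ M : Finset E, M.card = T.card + Fintype.card ι ∧ affineSpan ℝ (M : Set E) = ⊤ ∧
      (∀ p ∈ M, ∀ q ∈ M, ∃ z : ℤ, dist p q = z) ∧ ∃ p ∈ M, ∃ q ∈ M, dist p q = d := by
  set u := b none
  have hu : ‖u‖ = 1 := b.orthonormal.1 none
  have hf : Orthonormal ℝ fun i => b (some i) := b.orthonormal.comp _ (Option.some_injective ι)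
  have hd' : (0 : ℝ) < d := by exact_mod_cast hd
  have hC' : (2 : ℝ) ≤ C := by exact_mod_cast hC
  obtain ⟨v, hvnorm, hvv, hvspan⟩ := hf.exists_regular_simplex (R := d * √C / 2) hd' (by
    rw [div_pow, mul_pow, Real.sq_sqrt (by linarith)]; nlinarith)
  have hv : ∀ j, ‖v j‖ ^ 2 = d ^ 2 * C / 4 := fun j => by
    rw [hvnorm, div_pow, mul_pow, Real.sq_sqrt (by linarith)]; ring
  have hvinj : Function.Injective v := fun j k hjk => by
    by_contra hne
    simpa [hjk, hd'.ne] using hvv j k hne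
  have huv : ∀ j, inner ℝ u (v j) = 0 := by
    have : Submodule.span ℝ (Set.range v) ≤ (ℝ ∙ u)ᗮ := by
      rw [hvspan, Submodule.span_le]
      rintro _ ⟨i, rfl⟩
      exact Submodule.mem_orthogonal_singleton_iff_inner_right.2
        (b.orthonormal.inner_eq_zero (by simp))
    exact fun j => Submodule.mem_orthogonal_singleton_iff_inner_right.1
      (this (Submodule.subset_span ⟨j, rfl⟩))
  have hspan : Submodule.span ℝ (insert u (Set.range v)) = ⊤ := by
    rw [eq_top_iff, ← b.toBasis.span_eq, Submodule.span_le]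
    rintro _ ⟨_ | i, rfl⟩
    · exact Submodule.subset_span (by simp [u])
    · refine Submodule.span_mono (Set.subset_insert _ _) ?_
      rw [hvspan]
      exact Submodule.subset_span ⟨i, by simp⟩
  refine ⟨lineSimplexConfig u v d T, card_lineSimplexConfig hu huv hvinj hd'.ne',
    affineSpan_lineSimplexConfig h0 h1 hd'.ne' hspan,
    exists_int_dist_eq_of_mem_lineSimplexConfig hT hu huv hv hvv,
    _, mem_lineSimplexConfig_line h0, _, mem_lineSimplexConfig_line h1, ?_⟩
  rw [dist_smul_smul_of_norm_eq_one hu]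
  simp

end LineAndSimplex

/-- For all integers m ≥ 2, n ≥ m + 1, d ≥ 1 there exists an integral point set
of n points in ℝ^m (spanning ℝ^m, all pairwise distances integers) containing
two points at distance exactly d. -/
theorem exists_integral_point_set_with_distance (m n d : ℕ)
    (hm : 2 ≤ m) (hn : m + 1 ≤ n) (hd : 1 ≤ d) :
    ∃ M : Finset (EuclideanSpace ℝ (Fin m)),
      M.card = n ∧
      affineSpan ℝ (M : Set (EuclideanSpace ℝ (Fin m))) = ⊤ ∧
      (∀ p ∈ M, ∀ q ∈ M, ∃ z : ℤ, dist p q = (z : ℝ)) ∧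
      (∃ p ∈ M, ∃ q ∈ M, dist p q = (d : ℝ)) := by
  obtain ⟨m, rfl⟩ : ∃ k, m = k + 1 := ⟨m - 1, by omega⟩
  obtain ⟨C, hC, T, hTcard, h0, h1, hT⟩ := exists_finset_isGoodAbscissa (N := n - m) (by omega)
  obtain ⟨M, hcard, hM⟩ := ((EuclideanSpace.basisFun (Fin (m + 1)) ℝ).reindex
    (finSuccEquiv m)).exists_integral_point_set hC h0 h1 hT hd
  exact ⟨M, by rw [hcard, hTcard, Fintype.card_fin]; omega, hM⟩
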